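/- Consider the Watts–Strogatz mean-field system with inertia δ = 0. Suppose the Case-4 condition p·(α+β)·min{r, 1−r} > α holds, and let c be a real number with 0 < c < 1/2. Then the function θ(t) = (1−(1−c)e^{−t}, 1−(1−c)e^{−t}) is a solution of the system on the interval [0, ln(2(1−c))) with θ^B(0) = θ^R(0) = c, and θ(t) → (1/2, 1/2) as t → ln(2(1−c)) from the left (non-partisan polarization, with each group approaching an equal split between the two choices). -/

import Mathlib

open Set Filter

/-- `g^B(θ) = α(1−pr)(2θ^B−1) − βpr(2θ^R−1)`. -/
noncomputable def gB (α β p r θB θR : ℝ) : ℝ :=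
  α * (1 - p * r) * (2 * θB - 1) - β * p * r * (2 * θR - 1)

/-- `g^R(θ) = α(1−p(1−r))(2θ^R−1) − β(1−r)p(2θ^B−1)`. -/
noncomputable def gR (α β p r θB θR : ℝ) : ℝ :=
  α * (1 - p * (1 - r)) * (2 * θR - 1) - β * (1 - r) * p * (2 * θB - 1)

/-- Right-hand side of the blue equation:
`(1−θ^B)·𝟙[g^B(θ) > 0] − θ^B·𝟙[g^B(θ) < 0]`. -/
noncomputable def rhsB (α β p r θB θR : ℝ) : ℝ :=
  (1 - θB) * (if 0 < gB α β p r θB θR then 1 else 0)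
    - θB * (if gB α β p r θB θR < 0 then 1 else 0)

/-- Right-hand side of the red equation:
`(1−θ^R)·𝟙[g^R(θ) > 0] − θ^R·𝟙[g^R(θ) < 0]`. -/
noncomputable def rhsR (α β p r θB θR : ℝ) : ℝ :=
  (1 - θR) * (if 0 < gR α β p r θB θR then 1 else 0)
    - θR * (if gR α β p r θB θR < 0 then 1 else 0)

/-- `θ = (θ^B, θ^R)` is a solution of the Watts–Strogatz mean-field system
(with inertia `δ = 0`) on the set `J`: it is differentiable on `J` and satisfies
the two differential equations at every `t ∈ J`. -/
def IsWSSolutionOn (α β p r : ℝ) (θB θR : ℝ → ℝ) (J : Set ℝ) : Prop :=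
  ∀ t ∈ J,
    HasDerivWithinAt θB (rhsB α β p r (θB t) (θR t)) J t ∧
    HasDerivWithinAt θR (rhsR α β p r (θB t) (θR t)) J t

/-!
On the diagonal `θ^B = θ^R = θ` both switching functions factor as
`g(θ) = (α - p(α+β)s)(2θ - 1)` with `s = r` resp. `s = 1 - r`, and the Case-4 condition makes both
coefficients negative. Hence both groups see `g > 0` as long as `θ < 1/2`, and the system reduces to
`θ' = 1 - θ`, solved by `1 - (1-c)e^{-t}`, which stays below `1/2` exactly until `t = ln(2(1-c))`.
-/

theorem gB_diag (α β p r θ : ℝ) :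
    gB α β p r θ θ = (α - p * (α + β) * r) * (2 * θ - 1) := by
  unfold gB; ring

theorem gR_diag (α β p r θ : ℝ) :
    gR α β p r θ θ = (α - p * (α + β) * (1 - r)) * (2 * θ - 1) := by
  unfold gR; ring

theorem gB_diag_pos_of_lt_half {α β p r θ : ℝ} (hcase : α < p * (α + β) * r)
    (hθ : θ < 1 / 2) : 0 < gB α β p r θ θ := by
  rw [gB_diag]
  exact mul_pos_of_neg_of_neg (by linarith) (by linarith)

theorem gR_diag_pos_of_lt_half {α β p r θ : ℝ} (hcase : α < p * (α + β) * (1 - r))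
    (hθ : θ < 1 / 2) : 0 < gR α β p r θ θ := by
  rw [gR_diag]
  exact mul_pos_of_neg_of_neg (by linarith) (by linarith)

theorem rhsB_of_gB_pos {α β p r θB θR : ℝ} (h : 0 < gB α β p r θB θR) :
    rhsB α β p r θB θR = 1 - θB := by
  simp [rhsB, h, h.le.not_gt]

theorem rhsR_of_gR_pos {α β p r θB θR : ℝ} (h : 0 < gR α β p r θB θR) :
    rhsR α β p r θB θR = 1 - θR := by
  simp [rhsR, h, h.le.not_gt]

theorem hasDerivAt_one_sub_mul_exp_neg (a t : ℝ) :
    HasDerivAt (fun t => 1 - a * Real.exp (-t)) (1 - (1 - a * Real.exp (-t))) t := by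
  have h := (((Real.hasDerivAt_exp (-t)).comp t (hasDerivAt_neg t)).const_mul a).const_sub 1
  rwa [show 1 - (1 - a * Real.exp (-t)) = -(a * (Real.exp (-t) * -1)) by ring]

theorem one_sub_mul_exp_neg_log {c : ℝ} (hc : c < 1) :
    1 - (1 - c) * Real.exp (-Real.log (2 * (1 - c))) = 1 / 2 := by
  have hc' : 1 - c ≠ 0 := by linarith
  rw [Real.exp_neg, Real.exp_log (by positivity)]
  field_simp
  ring

theorem one_sub_mul_exp_neg_lt_half {c t : ℝ} (hc : c < 1) (ht : t < Real.log (2 * (1 - c))) :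
    1 - (1 - c) * Real.exp (-t) < 1 / 2 := by
  rw [← one_sub_mul_exp_neg_log hc]
  gcongr

theorem ws_case4_trajectory_low_general
    (α β p r : ℝ)
    (hα : α ∈ Set.Icc (0:ℝ) 1) (hβ : β ∈ Set.Icc (0:ℝ) 1)
    (hp : p ∈ Set.Icc (0:ℝ) 1)
    (hcase : α < p * (α + β) * min r (1 - r))
    (c : ℝ) (hc2 : c < 1 / 2) :
    IsWSSolutionOn α β p r (fun t => 1 - (1 - c) * Real.exp (-t))
      (fun t => 1 - (1 - c) * Real.exp (-t))
      (Set.Ico 0 (Real.log (2 * (1 - c)))) ∧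
    1 - (1 - c) * Real.exp (-(0:ℝ)) = c ∧
    Filter.Tendsto (fun t => (1 - (1 - c) * Real.exp (-t), 1 - (1 - c) * Real.exp (-t)))
      (nhdsWithin (Real.log (2 * (1 - c))) (Set.Iio (Real.log (2 * (1 - c)))))
      (nhds ((1 / 2 : ℝ), (1 / 2 : ℝ))) := by
  have hk : 0 ≤ p * (α + β) := mul_nonneg hp.1 (add_nonneg hα.1 hβ.1)
  have hcaseB := hcase.trans_le (mul_le_mul_of_nonneg_left (min_le_left r (1 - r)) hk)
  have hcaseR := hcase.trans_le (mul_le_mul_of_nonneg_left (min_le_right r (1 - r)) hk)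
  refine ⟨fun t ht => ?_, by simp, ?_⟩
  · have hθ := one_sub_mul_exp_neg_lt_half (by linarith) ht.2
    have hderiv := (hasDerivAt_one_sub_mul_exp_neg (1 - c) t).hasDerivWithinAt
      (s := Set.Ico 0 (Real.log (2 * (1 - c))))
    exact ⟨rhsB_of_gB_pos (gB_diag_pos_of_lt_half hcaseB hθ) ▸ hderiv,
      rhsR_of_gR_pos (gR_diag_pos_of_lt_half hcaseR hθ) ▸ hderiv⟩
  · rw [← one_sub_mul_exp_neg_log (by linarith : c < 1)]
    exact tendsto_nhdsWithin_of_tendsto_nhds ((by fun_prop : Continuous _).tendsto _)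

/-- Under the Case-4 condition `p(α+β)min{r,1−r} > α` and `0 < c < 1/2`,
`θ(t) = (1−(1−c)e^{−t}, 1−(1−c)e^{−t})` solves the system on `[0, ln(2(1−c)))` with
`θ^B(0) = θ^R(0) = c`, and `θ(t) → (1/2, 1/2)` as `t → ln(2(1−c))⁻`
(non-partisan polarization). -/
theorem ws_case4_trajectory_low
    (α β p r : ℝ)
    (hα : α ∈ Set.Icc (0:ℝ) 1) (hβ : β ∈ Set.Icc (0:ℝ) 1)
    (hp : p ∈ Set.Icc (0:ℝ) 1) (hr : r ∈ Set.Ioo (0:ℝ) 1)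
    (hcase : α < p * (α + β) * min r (1 - r))
    (c : ℝ) (hc1 : 0 < c) (hc2 : c < 1 / 2) :
    IsWSSolutionOn α β p r (fun t => 1 - (1 - c) * Real.exp (-t))
      (fun t => 1 - (1 - c) * Real.exp (-t))
      (Set.Ico 0 (Real.log (2 * (1 - c)))) ∧
    1 - (1 - c) * Real.exp (-(0:ℝ)) = c ∧
    Filter.Tendsto (fun t => (1 - (1 - c) * Real.exp (-t), 1 - (1 - c) * Real.exp (-t)))
      (nhdsWithin (Real.log (2 * (1 - c))) (Set.Iio (Real.log (2 * (1 - c)))))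
      (nhds ((1 / 2 : ℝ), (1 / 2 : ℝ))) :=
  ws_case4_trajectory_low_general α β p r hα hβ hp hcase c hc2
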